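/- Suppose F is a family of infinite subsets of ℕ of cardinality less than 𝔯. Then there exists a single sequence X = ⟨x_k : k < ω⟩ of subsets of ℕ such that X promptly splits A for every A ∈ F. -/

import Mathlib

open Filter Set Cardinal

/-- The reaping number `𝔯`. -/
noncomputable def frakR : Cardinal :=
  sInf { κc : Cardinal | ∃ R : Set (Set ℕ), #R = κc ∧ (∀ a ∈ R, a.Infinite) ∧
    ∀ x : Set ℕ, ∃ a ∈ R, (a \ x).Finite ∨ (a ∩ x).Finite }

/-- `x⁰ = x` and `x¹ = ℕ \ x`, with `false` coding `0` and `true` coding `1`. -/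
def SideOf (x : Set ℕ) (b : Bool) : Set ℕ := if b then xᶜ else x

/-- A sequence `X = ⟨x_i : i < ω⟩` of subsets of `ℕ` promptly splits an infinite `a ⊆ ℕ`
if for every `n` and every `σ : {0,…,n} → 2`, `(⋂_{i ≤ n} x_i^{σ(i)}) ∩ a` is infinite. -/
def PromptlySplits (X : ℕ → Set ℕ) (a : Set ℕ) : Prop :=
  ∀ (n : ℕ) (σ : ℕ → Bool),
    ((⋂ i ∈ Finset.range (n + 1), SideOf (X i) (σ i)) ∩ a).Infinite

/-!
By the definition of `𝔯`, fewer than `𝔯` infinite sets have a common splitter; and `𝔯` is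
infinite, since a finite family is split by the union of the even blocks of a partition of `ℕ`
into intervals each of which meets every member. Choose `x_n` to split every trace `c ∩ a`,
`a ∈ F`, of the `2ⁿ` cells `c` cut out by `x_0, …, x_{n-1}`: as `𝔯` is infinite there are fewer
than `𝔯` traces, and by induction on `n` they are all infinite, each being one half of a trace
of stage `n - 1` split by `x_{n-1}`.
-/

def Splits {α : Type*} (x a : Set α) : Prop := (a ∩ x).Infinite ∧ (a \ x).Infinite

lemma splits_iff_not_finite {α : Type*} {x a : Set α} :
    Splits x a ↔ ¬((a \ x).Finite ∨ (a ∩ x).Finite) := by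
  rw [Splits, not_or, Set.Infinite, Set.Infinite, and_comm]

lemma Splits.inter_sideOf_infinite {x a : Set ℕ} (h : Splits x a) (b : Bool) :
    (a ∩ SideOf x b).Infinite := by
  cases b
  · exact h.1
  · simpa [SideOf, sdiff_eq] using h.2

lemma splits_iUnion_Ico_even {t : ℕ → ℕ} (ht : StrictMono t) {a : Set ℕ}
    (ha : ∀ j, (a ∩ Ico (t j) (t (j + 1))).Nonempty) :
    Splits (⋃ j, Ico (t (2 * j)) (t (2 * j + 1))) a := by
  constructor
  · refine infinite_of_forall_exists_gt fun N => ?_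
    obtain ⟨k, hka, hk⟩ := ha (2 * (N + 1))
    refine ⟨k, ⟨hka, mem_iUnion.2 ⟨N + 1, hk⟩⟩, ?_⟩
    have := ht.le_apply (x := 2 * (N + 1))
    exact lt_of_lt_of_le (by omega) (this.trans hk.1)
  · refine infinite_of_forall_exists_gt fun N => ?_
    obtain ⟨k, hka, hk⟩ := ha (2 * N + 1)
    refine ⟨k, ⟨hka, fun hkx => ?_⟩, ?_⟩
    · obtain ⟨i, hi⟩ := mem_iUnion.1 hkx
      have h₁ := ht.lt_iff_lt.1 (hi.1.trans_lt hk.2)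
      have h₂ := ht.lt_iff_lt.1 (hk.1.trans_lt hi.2)
      omega
    · have := ht.le_apply (x := 2 * N + 1)
      exact lt_of_lt_of_le (by omega) (this.trans hk.1)

lemma exists_strictMono_inter_Ico_nonempty {R : Set (Set ℕ)} (hfin : R.Finite)
    (hinf : ∀ a ∈ R, a.Infinite) :
    ∃ t : ℕ → ℕ, StrictMono t ∧ ∀ a ∈ R, ∀ j, (a ∩ Ico (t j) (t (j + 1))).Nonempty := by
  have step : ∀ m, ∃ M, m < M ∧ ∀ a ∈ R, (a ∩ Ico m M).Nonempty := by
    intro m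
    have hall : ∀ᶠ M in atTop, ∀ a ∈ R, (a ∩ Ico m M).Nonempty := by
      refine hfin.eventually_all.2 fun a ha => ?_
      obtain ⟨k, hka, hmk⟩ := (hinf a ha).exists_gt m
      filter_upwards [eventually_gt_atTop k] with M hkM
      exact ⟨k, hka, hmk.le, hkM⟩
    exact ((eventually_gt_atTop m).and hall).exists
  choose f hf using step
  refine ⟨fun j => f^[j] 0, strictMono_nat_of_lt_succ fun j => ?_, fun a ha j => ?_⟩
  · simpa only [Function.iterate_succ_apply'] using (hf _).1
  · simpa only [Function.iterate_succ_apply'] using (hf _).2 a ha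

lemma exists_splits_of_finite {R : Set (Set ℕ)} (hfin : R.Finite) (hinf : ∀ a ∈ R, a.Infinite) :
    ∃ x : Set ℕ, ∀ a ∈ R, Splits x a :=
  let ⟨_, ht, hmeet⟩ := exists_strictMono_inter_Ico_nonempty hfin hinf
  ⟨_, fun a ha => splits_iUnion_Ico_even ht (hmeet a ha)⟩

lemma aleph0_le_frakR : ℵ₀ ≤ frakR := by
  have hreaping : ∃ R : Set (Set ℕ), (∀ a ∈ R, a.Infinite) ∧
      ∀ x : Set ℕ, ∃ a ∈ R, (a \ x).Finite ∨ (a ∩ x).Finite := by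
    refine ⟨{a | a.Infinite}, fun a ha => ha, fun x => ?_⟩
    by_cases hx : x.Infinite
    · exact ⟨x, hx, Or.inl (by simp)⟩
    · exact ⟨univ, infinite_univ, Or.inr ((not_infinite.1 hx).subset inter_subset_right)⟩
  obtain ⟨R₀, hR₀⟩ := hreaping
  refine le_csInf ⟨_, R₀, rfl, hR₀⟩ ?_
  rintro _ ⟨R, rfl, hinf, hreap⟩
  by_contra hlt
  obtain ⟨x, hx⟩ := exists_splits_of_finite (lt_aleph0_iff_set_finite.1 (not_le.1 hlt)) hinf
  obtain ⟨a, ha, hfin⟩ := hreap x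
  exact splits_iff_not_finite.1 (hx a ha) hfin

lemma exists_splits_of_mk_lt_frakR {R : Set (Set ℕ)} (hinf : ∀ a ∈ R, a.Infinite)
    (hcard : #R < frakR) : ∃ x : Set ℕ, ∀ a ∈ R, Splits x a := by
  by_contra! h
  refine hcard.not_ge (csInf_le' ⟨R, rfl, hinf, fun x => ?_⟩)
  obtain ⟨a, ha, hx⟩ := h x
  exact ⟨a, ha, by_contra fun hnot => hx (splits_iff_not_finite.2 hnot)⟩

def cell (X : ℕ → Set ℕ) (n : ℕ) (σ : ℕ → Bool) : Set ℕ :=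
  ⋂ i ∈ Finset.range n, SideOf (X i) (σ i)

lemma cell_zero (X : ℕ → Set ℕ) (σ : ℕ → Bool) : cell X 0 σ = Set.univ := by
  simp [cell]

lemma cell_succ (X : ℕ → Set ℕ) (n : ℕ) (σ : ℕ → Bool) :
    cell X (n + 1) σ = cell X n σ ∩ SideOf (X n) (σ n) := by
  rw [cell, Finset.range_add_one, Finset.set_biInter_insert, inter_comm, cell]

lemma cell_congr {X Y : ℕ → Set ℕ} {n : ℕ} {σ τ : ℕ → Bool} (hXY : ∀ i < n, X i = Y i)
    (hστ : ∀ i < n, σ i = τ i) : cell X n σ = cell Y n τ :=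
  iInter₂_congr fun i hi => by rw [hXY i (Finset.mem_range.1 hi), hστ i (Finset.mem_range.1 hi)]

lemma finite_range_cell (X : ℕ → Set ℕ) (n : ℕ) : (range (cell X n)).Finite := by
  let extend : (Fin n → Bool) → ℕ → Bool := fun τ i => if h : i < n then τ ⟨i, h⟩ else false
  refine (finite_range (cell X n ∘ extend)).subset ?_
  rintro _ ⟨σ, rfl⟩
  exact ⟨fun i => σ i, cell_congr (fun _ _ => rfl) fun i hi => by simp [extend, hi]⟩

def cellTraces (F : Set (Set ℕ)) (X : ℕ → Set ℕ) (n : ℕ) : Set (Set ℕ) :=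
  image2 (· ∩ ·) (range (cell X n)) F

lemma mk_cellTraces_lt_frakR {F : Set (Set ℕ)} (hcard : #F < frakR) (X : ℕ → Set ℕ) (n : ℕ) :
    #(cellTraces F X n) < frakR :=
  mk_image2_le.trans_lt <| mul_lt_of_lt aleph0_le_frakR
    ((lt_aleph0_iff_set_finite.2 (finite_range_cell X n)).trans_le aleph0_le_frakR) hcard

lemma cellTraces_congr {F : Set (Set ℕ)} {X Y : ℕ → Set ℕ} {n : ℕ} (h : ∀ i < n, X i = Y i) :
    cellTraces F X n = cellTraces F Y n := by
  have : cell X n = cell Y n := funext fun _ => cell_congr h fun _ _ => rfl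
  rw [cellTraces, cellTraces, this]

noncomputable def promptSplitter (F : Set (Set ℕ)) (n : ℕ) : Set ℕ :=
  Classical.epsilon fun x =>
    ∀ s ∈ cellTraces F (fun i => if i < n then promptSplitter F i else ∅) n, Splits x s

lemma promptSplitter_eq (F : Set (Set ℕ)) (n : ℕ) :
    promptSplitter F n = Classical.epsilon fun x =>
      ∀ s ∈ cellTraces F (promptSplitter F) n, Splits x s := by
  rw [promptSplitter, cellTraces_congr fun i hi => if_pos hi]

lemma cell_promptSplitter_inter_infinite {F : Set (Set ℕ)} (hinf : ∀ a ∈ F, a.Infinite)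
    (hcard : #F < frakR) (n : ℕ) (σ : ℕ → Bool) {a : Set ℕ} (ha : a ∈ F) :
    (cell (promptSplitter F) n σ ∩ a).Infinite := by
  induction n generalizing σ a with
  | zero => simpa [cell_zero] using hinf a ha
  | succ n ih =>
    have hsplit : ∀ s ∈ cellTraces F (promptSplitter F) n, Splits (promptSplitter F n) s := by
      rw [promptSplitter_eq]
      refine Classical.epsilon_spec
        (exists_splits_of_mk_lt_frakR ?_ (mk_cellTraces_lt_frakR hcard _ n))
      rintro _ ⟨_, ⟨τ, rfl⟩, b, hb, rfl⟩
      exact ih τ hb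
    rw [cell_succ, inter_right_comm]
    exact (hsplit _ (mem_image2_of_mem (mem_range_self σ) ha)).inter_sideOf_infinite (σ n)

/-- Any family of fewer than `𝔯` many infinite subsets of `ℕ` is simultaneously
promptly split by a single sequence of subsets of `ℕ`. -/
theorem stmt15 (F : Set (Set ℕ)) (hinf : ∀ a ∈ F, a.Infinite) (hcard : #F < frakR) :
    ∃ X : ℕ → Set ℕ, ∀ a ∈ F, PromptlySplits X a :=
  ⟨promptSplitter F, fun _ ha n σ => cell_promptSplitter_inter_infinite hinf hcard (n + 1) σ ha⟩
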